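/- arXiv:2109.13878 — 3 statements merged into one kernel-verified Lean document; each statement's English description precedes it below -/
import Mathlib

section
/- Let u_1 : [−l_1, 0] → ℂ and u_j : [0, l_j] → ℂ (j = 2,...,N) be C^4 functions of x depending smoothly on t, each solving i∂_t u_j + ∂_x^2 u_j − ∂_x^4 u_j = 0, and satisfying the boundary conditions: u_1(−l_1)=∂_x u_1(−l_1)=0, u_j(l_j)=∂_x u_j(l_j)=0, u_1(0)=α_j u_j(0), ∂_x^2 u_1(0)=α_j ∂_x^2 u_j(0), ∂_x u_1(0)=Σ_j ∂_x u_j(0)/α_j, ∂_x^3 u_1(0)=Σ_j ∂_x^3 u_j(0)/α_j. Then the L^2 norm ||u(t)||_{L^2(G)}^2 = ∫_{−l_1}^0 |u_1|^2 dx + Σ_{j=2}^N ∫_0^{l_j} |u_j|^2 dx is constant in t. -/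
open Complex intervalIntegral


noncomputable def Bnd (w : ℝ → ℂ) (x : ℝ) : ℂ :=
  Complex.I * (deriv w x * star (w x) - iteratedDeriv 3 w x * star (w x)
    + iteratedDeriv 2 w x * star (deriv w x))

lemma iter_hasDerivAt {w : ℝ → ℂ} (hw : ContDiff ℝ (⊤ : ℕ∞) w) (k : ℕ) (x : ℝ) :
    HasDerivAt (iteratedDeriv k w) (iteratedDeriv (k + 1) w x) x := by
  have hk : ContDiff ℝ (⊤ : ℕ∞) (iteratedDeriv k w) := by
    rw [iteratedDeriv_eq_iterate]
    exact (hw.of_le (by simp)).iterate_deriv k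
  rw [iteratedDeriv_succ]
  exact ((hk.differentiable (by simp)) x).hasDerivAt

lemma iter_continuous {w : ℝ → ℂ} (hw : ContDiff ℝ (⊤ : ℕ∞) w) (k : ℕ) :
    Continuous (iteratedDeriv k w) := by
  have hk : ContDiff ℝ (⊤ : ℕ∞) (iteratedDeriv k w) := by
    rw [iteratedDeriv_eq_iterate]
    exact (hw.of_le (by simp)).iterate_deriv k
  exact hk.continuous

lemma Bnd_hasDerivAt {w : ℝ → ℂ} (hw : ContDiff ℝ (⊤ : ℕ∞) w) (x : ℝ) :
    HasDerivAt (fun y => 2 * (Bnd w y).re)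
      (2 * ((Complex.I * (iteratedDeriv 2 w x - iteratedDeriv 4 w x)) * star (w x)).re) x := by
  have e0 : HasDerivAt w (deriv w x) x := by
    simpa [iteratedDeriv_one] using iter_hasDerivAt hw 0 x
  have e1 : HasDerivAt (deriv w) (iteratedDeriv 2 w x) x := by
    have := iter_hasDerivAt hw 1 x
    rwa [iteratedDeriv_one] at this
  have e2 : HasDerivAt (iteratedDeriv 2 w) (iteratedDeriv 3 w x) x := iter_hasDerivAt hw 2 x
  have e3 : HasDerivAt (iteratedDeriv 3 w) (iteratedDeriv 4 w x) x := iter_hasDerivAt hw 3 x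
  have hinner : HasDerivAt
      (fun y => deriv w y * star (w y) - iteratedDeriv 3 w y * star (w y)
        + iteratedDeriv 2 w y * star (deriv w y))
      ((iteratedDeriv 2 w x * star (w x) + deriv w x * star (deriv w x))
        - (iteratedDeriv 4 w x * star (w x) + iteratedDeriv 3 w x * star (deriv w x))
        + (iteratedDeriv 3 w x * star (deriv w x)
            + iteratedDeriv 2 w x * star (iteratedDeriv 2 w x))) x :=
    ((e1.mul e0.star).sub (e3.mul e0.star)).add (e2.mul e1.star)
  have hB : HasDerivAt (fun y => Bnd w y) (Complex.I *
      ((iteratedDeriv 2 w x * star (w x) + deriv w x * star (deriv w x))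
        - (iteratedDeriv 4 w x * star (w x) + iteratedDeriv 3 w x * star (deriv w x))
        + (iteratedDeriv 3 w x * star (deriv w x)
            + iteratedDeriv 2 w x * star (iteratedDeriv 2 w x)))) x := by
    simpa [Bnd] using hinner.const_mul Complex.I
  have hre := Complex.reCLM.hasFDerivAt.comp_hasDerivAt x hB
  have := hre.const_mul (2 : ℝ)
  convert this using 1
  · rfl
  · rfl
  · rfl
  simp only [Complex.reCLM_apply, Complex.star_def]
  simp [Complex.mul_re, Complex.mul_im, Complex.add_re, Complex.add_im,
    Complex.sub_re, Complex.sub_im, Complex.conj_re, Complex.conj_im, Complex.I_re, Complex.I_im]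
  ring

lemma edge_hasDerivAt (u : ℝ → ℝ → ℂ)
    (hsm : ContDiff ℝ (⊤ : ℕ∞) fun p : ℝ × ℝ => u p.1 p.2)
    (hpde : ∀ t x : ℝ, Complex.I * deriv (fun τ => u τ x) t
      + iteratedDeriv 2 (u t) x - iteratedDeriv 4 (u t) x = 0)
    (a b t₀ : ℝ) :
    HasDerivAt (fun t => ∫ x in a..b, ‖u t x‖ ^ 2)
      (2 * (Bnd (u t₀) b - Bnd (u t₀) a).re) t₀ := by
  set U : ℝ × ℝ → ℂ := fun p => u p.1 p.2 with hUdef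
  have hU : ContDiff ℝ (⊤ : ℕ∞) U := hsm
  set D : ℝ × ℝ → ℂ := fun p => fderiv ℝ U p (1, 0) with hDdef
  have hD_cont : Continuous D :=
    (ContinuousLinearMap.apply ℝ ℂ ((1:ℝ), (0:ℝ))).continuous.comp
      (hU.continuous_fderiv (by simp))
  have hDt : ∀ t x : ℝ, HasDerivAt (fun τ => u τ x) (D (t, x)) t := by
    intro t x
    have h1 : HasFDerivAt U (fderiv ℝ U (t, x)) (t, x) :=
      (hU.differentiable (by simp) (t, x)).hasFDerivAt
    have h2 : HasDerivAt (fun τ : ℝ => (τ, x)) ((1:ℝ), (0:ℝ)) t :=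
      (hasDerivAt_id t).prodMk (hasDerivAt_const t x)
    exact h1.comp_hasDerivAt t h2
  -- pointwise derivative in t of the squared norm
  have hkey : ∀ t x : ℝ, HasDerivAt (fun τ => ‖u τ x‖ ^ 2)
      (2 * (D (t, x) * star (u t x)).re) t := by
    intro t x
    have hf := hDt t x
    have hmul : HasDerivAt (fun τ => u τ x * star (u τ x))
        (D (t, x) * star (u t x) + u t x * star (D (t, x))) t := hf.mul hf.star
    have hre := Complex.reCLM.hasFDerivAt.comp_hasDerivAt t hmul
    have hfun : (fun τ => ‖u τ x‖ ^ 2) = fun τ => Complex.reCLM (u τ x * star (u τ x)) := by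
      funext τ
      simp [Complex.star_def, Complex.mul_conj, Complex.normSq_eq_norm_sq,
        ← Complex.ofReal_pow]
    rw [hfun]
    convert hre using 1
    · rfl
    · rfl
    · rfl
    have h' : u t x * star (D (t, x)) = star (D (t, x) * star (u t x)) := by simp [star_mul]
    rw [h']
    simp [Complex.add_re, Complex.star_def]
    ring
  -- continuity of the t-derivative in both variables, giving a bound
  have hcontF' : Continuous fun p : ℝ × ℝ => 2 * (D p * star (U p)).re :=
    continuous_const.mul (Complex.continuous_re.comp (hD_cont.mul hU.continuous.star))
  obtain ⟨C, hC⟩ := ((isCompact_Icc (a := t₀ - 1) (b := t₀ + 1)).prod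
      (isCompact_uIcc (a := a) (b := b))).exists_bound_of_continuousOn hcontF'.continuousOn
  have hcont_slice : ∀ t : ℝ, Continuous fun x => u t x :=
    fun t => hU.continuous.comp (Continuous.prodMk_right t)
  have main := (intervalIntegral.hasDerivAt_integral_of_dominated_loc_of_deriv_le
      (𝕜 := ℝ) (μ := MeasureTheory.volume)
      (F := fun t x => ‖u t x‖ ^ 2)
      (F' := fun t x => 2 * (D (t, x) * star (u t x)).re)
      (x₀ := t₀) (a := a) (b := b) (bound := fun _ => C) (Metric.ball_mem_nhds t₀ one_pos)
      (Filter.Eventually.of_forall fun t =>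
        (((hcont_slice t).norm.pow 2).aestronglyMeasurable))
      (((hcont_slice t₀).norm.pow 2).intervalIntegrable a b)
      ((continuous_const.mul (Complex.continuous_re.comp
          ((hD_cont.comp (Continuous.prodMk_right t₀)).mul
            (hcont_slice t₀).star))).aestronglyMeasurable)
      (Filter.Eventually.of_forall fun x hx => by
        intro τ hτ
        have hτ' : τ ∈ Set.Icc (t₀ - 1) (t₀ + 1) := by
          have := Metric.mem_ball.mp hτ
          rw [Real.dist_eq] at this
          constructor <;> [linarith [abs_lt.mp this]; linarith [abs_lt.mp this]]
        have hx' : x ∈ Set.uIcc a b := Set.Ioc_subset_Icc_self hx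
        simpa using hC (τ, x) ⟨hτ', hx'⟩)
      (intervalIntegrable_const)
      (Filter.Eventually.of_forall fun x _ => fun τ _ => hkey τ x)).2
  -- identify the integral of the derivative with the boundary expression
  have hw : ContDiff ℝ (⊤ : ℕ∞) (u t₀) := by
    have : (fun x => u t₀ x) = U ∘ fun x : ℝ => (t₀, x) := rfl
    rw [show (u t₀) = fun x => u t₀ x from rfl, this]
    exact hU.comp (contDiff_const.prodMk contDiff_id)
  have hDval : ∀ x : ℝ, D (t₀, x)
      = Complex.I * (iteratedDeriv 2 (u t₀) x - iteratedDeriv 4 (u t₀) x) := by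
    intro x
    have hd : deriv (fun τ => u τ x) t₀ = D (t₀, x) := (hDt t₀ x).deriv
    have := hpde t₀ x
    rw [hd] at this
    linear_combination (-Complex.I) * this + D (t₀, x) * Complex.I_mul_I
  have hint : (∫ x in a..b, 2 * (D (t₀, x) * star (u t₀ x)).re)
      = 2 * (Bnd (u t₀) b - Bnd (u t₀) a).re := by
    have hHDx : ∀ x ∈ Set.uIcc a b, HasDerivAt (fun y => 2 * (Bnd (u t₀) y).re)
        (2 * (D (t₀, x) * star (u t₀ x)).re) x := by
      intro x _
      rw [hDval x]
      exact Bnd_hasDerivAt hw x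
    have hftc := intervalIntegral.integral_eq_sub_of_hasDerivAt
      (f := fun y => 2 * (Bnd (u t₀) y).re)
      (f' := fun x => 2 * (D (t₀, x) * star (u t₀ x)).re)
      hHDx
      ((continuous_const.mul (Complex.continuous_re.comp
          ((hD_cont.comp (Continuous.prodMk_right t₀)).mul
            (hcont_slice t₀).star))).intervalIntegrable a b)
    rw [hftc, Complex.sub_re]; ring
  rwa [hint] at main

/-- Conservation of the `L²(G)` norm for classical solutions of the linear biharmonic
Schrödinger equation `i∂ₜu + ∂ₓ²u − ∂ₓ⁴u = 0` on the compact star graph with edges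
`I₁ = (−l₁,0)`, `Iⱼ = (0,lⱼ)` and the stated boundary/transmission conditions. -/
theorem L2_conservation (N : ℕ) (hN : 2 ≤ N) (l α : ℕ → ℝ)
    (hl : ∀ j ∈ Finset.Icc 1 N, 0 < l j) (hα : ∀ j ∈ Finset.Icc 2 N, 0 < α j)
    (u : ℕ → ℝ → ℝ → ℂ)  -- u j t x
    (hsm : ∀ j ∈ Finset.Icc 1 N, ContDiff ℝ (⊤ : ℕ∞) (fun p : ℝ × ℝ => u j p.1 p.2))
    (hpde : ∀ j ∈ Finset.Icc 1 N, ∀ t x : ℝ,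
      Complex.I * deriv (fun τ => u j τ x) t
        + iteratedDeriv 2 (u j t) x - iteratedDeriv 4 (u j t) x = 0)
    (hbc1 : ∀ t : ℝ, u 1 t (-(l 1)) = 0 ∧ deriv (u 1 t) (-(l 1)) = 0)
    (hbcj : ∀ t : ℝ, ∀ j ∈ Finset.Icc 2 N, u j t (l j) = 0 ∧ deriv (u j t) (l j) = 0)
    (hv0 : ∀ t : ℝ, ∀ j ∈ Finset.Icc 2 N, u 1 t 0 = (α j : ℂ) * u j t 0)
    (hv2 : ∀ t : ℝ, ∀ j ∈ Finset.Icc 2 N,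
      iteratedDeriv 2 (u 1 t) 0 = (α j : ℂ) * iteratedDeriv 2 (u j t) 0)
    (hv1 : ∀ t : ℝ, deriv (u 1 t) 0 = ∑ j ∈ Finset.Icc 2 N, deriv (u j t) 0 / (α j : ℂ))
    (hv3 : ∀ t : ℝ, iteratedDeriv 3 (u 1 t) 0
      = ∑ j ∈ Finset.Icc 2 N, iteratedDeriv 3 (u j t) 0 / (α j : ℂ)) :
    ∀ t s : ℝ,
      ((∫ x in (-(l 1))..(0:ℝ), ‖u 1 t x‖ ^ 2)
          + ∑ j ∈ Finset.Icc 2 N, ∫ x in (0:ℝ)..(l j), ‖u j t x‖ ^ 2)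
      = ((∫ x in (-(l 1))..(0:ℝ), ‖u 1 s x‖ ^ 2)
          + ∑ j ∈ Finset.Icc 2 N, ∫ x in (0:ℝ)..(l j), ‖u j s x‖ ^ 2) := by
  have h1N : (1 : ℕ) ∈ Finset.Icc 1 N := by
    simp only [Finset.mem_Icc]; omega
  have hmem : ∀ j ∈ Finset.Icc 2 N, j ∈ Finset.Icc 1 N := by
    intro j hj
    simp only [Finset.mem_Icc] at *
    omega
  have hα' : ∀ j ∈ Finset.Icc 2 N, ((α j : ℝ) : ℂ) ≠ 0 := by
    intro j hj
    exact_mod_cast (hα j hj).ne'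
  set E : ℝ → ℝ := fun t => (∫ x in (-(l 1))..(0:ℝ), ‖u 1 t x‖ ^ 2)
      + ∑ j ∈ Finset.Icc 2 N, ∫ x in (0:ℝ)..(l j), ‖u j t x‖ ^ 2 with hEdef
  have hE : ∀ τ : ℝ, HasDerivAt E 0 τ := by
    intro τ
    have h1 := edge_hasDerivAt (u 1) (hsm 1 h1N) (hpde 1 h1N) (-(l 1)) 0 τ
    have hsum : HasDerivAt (fun t => ∑ j ∈ Finset.Icc 2 N, ∫ x in (0:ℝ)..(l j), ‖u j t x‖ ^ 2)
        (∑ j ∈ Finset.Icc 2 N, 2 * (Bnd (u j τ) (l j) - Bnd (u j τ) 0).re) τ :=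
      HasDerivAt.fun_sum fun j hj =>
        edge_hasDerivAt (u j) (hsm j (hmem j hj)) (hpde j (hmem j hj)) 0 (l j) τ
    have htot := h1.add hsum
    -- boundary terms at the outer endpoints vanish
    have hb1 : Bnd (u 1 τ) (-(l 1)) = 0 := by
      obtain ⟨ha, hb⟩ := hbc1 τ
      simp [Bnd, ha, hb]
    have hbj0 : ∀ j ∈ Finset.Icc 2 N, Bnd (u j τ) (l j) = 0 := by
      intro j hj
      obtain ⟨ha, hb⟩ := hbcj τ j hj
      simp [Bnd, ha, hb]
    -- vertex transmission identity
    have hvert : Bnd (u 1 τ) 0 = ∑ j ∈ Finset.Icc 2 N, Bnd (u j τ) 0 := by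
      simp only [Bnd]
      rw [← Finset.mul_sum]
      congr 1
      rw [hv1 τ, hv3 τ, star_sum, Finset.sum_mul, Finset.sum_mul, Finset.mul_sum,
        ← Finset.sum_sub_distrib, ← Finset.sum_add_distrib]
      refine Finset.sum_congr rfl fun j hj => ?_
      rw [hv0 τ j hj, hv2 τ j hj]
      have hαj := hα' j hj
      simp only [star_div₀, star_mul', Complex.star_def, Complex.conj_ofReal]
      field_simp
    have hzero : (2 * (Bnd (u 1 τ) 0 - Bnd (u 1 τ) (-(l 1))).re)
        + ∑ j ∈ Finset.Icc 2 N, 2 * (Bnd (u j τ) (l j) - Bnd (u j τ) 0).re = 0 := by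
      rw [hb1]
      rw [Finset.sum_congr rfl fun j hj => by rw [hbj0 j hj]]
      have : ∑ j ∈ Finset.Icc 2 N, 2 * ((0 : ℂ) - Bnd (u j τ) 0).re
          = -(2 * (∑ j ∈ Finset.Icc 2 N, Bnd (u j τ) 0).re) := by
        rw [Complex.re_sum, Finset.mul_sum, ← Finset.sum_neg_distrib]
        refine Finset.sum_congr rfl fun j hj => ?_
        simp [Complex.sub_re]
      rw [this, hvert]
      simp
    rw [hzero] at htot
    exact htot
  intro t s
  have hdiff : Differentiable ℝ E := fun τ => (hE τ).differentiableAt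
  have hderiv : ∀ τ, deriv E τ = 0 := fun τ => (hE τ).deriv
  exact is_const_of_deriv_eq_zero hdiff hderiv t s
end

section
/- Let u : [a,b] → ℂ be C^4 and q : [a,b] → ℝ be C^4. Then −Re ∫_a^b ∂_x^4 u ( \bar{∂_x u} q + (1/2) \bar u ∂_x q ) dx = −2∫_a^b |∂_x^2 u|^2 ∂_x q dx + (3/2)∫_a^b |∂_x u|^2 ∂_x^3 q dx + (1/2) Re ∫_a^b ∂_x u \bar u ∂_x^4 q dx + (1/2)[|∂_x^2 u|^2 q]_a^b − [|∂_x u|^2 ∂_x^2 q]_a^b + (3/2) Re[∂_x^2 u \bar{∂_x u} ∂_x q]_a^b − Re[∂_x^3 u \bar{∂_x u} q]_a^b − (1/2) Re[∂_x u \bar u ∂_x^3 q]_a^b + (1/2) Re[∂_x^2 u \bar u ∂_x^2 q]_a^b − (1/2) Re[∂_x^3 u \bar u ∂_x q]_a^b. -/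
/-! Integration by parts done once and for all: the increment of `bilaplacianBoundary u q` over
`[a, b]` is the sum of the boundary brackets, and by the product rule together with
`Re (z * conj w) = Re (w * conj z)` its derivative is the difference of the two sides' integrands.
The identity is then the fundamental theorem of calculus. -/
open Complex ComplexConjugate intervalIntegral

theorem ContDiff.hasDerivAt_iteratedDeriv {𝕜 F : Type*} [NontriviallyNormedField 𝕜]
    [NormedAddCommGroup F] [NormedSpace 𝕜 F] {n : WithTop ℕ∞} {f : 𝕜 → F} (hf : ContDiff 𝕜 n f)
    {k : ℕ} (hk : k < n) (x : 𝕜) :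
    HasDerivAt (iteratedDeriv k f) (iteratedDeriv (k + 1) f x) x := by
  rw [iteratedDeriv_succ]
  exact (hf.differentiable_iteratedDeriv k hk x).hasDerivAt

theorem HasDerivAt.re_mul_conj_mul_ofReal {f g : ℝ → ℂ} {r : ℝ → ℝ} {f' g' : ℂ} {r' x : ℝ}
    (hf : HasDerivAt f f' x) (hg : HasDerivAt g g' x) (hr : HasDerivAt r r' x) :
    HasDerivAt (fun y => (f y * conj (g y) * r y).re)
      ((f' * conj (g x) * r x + f x * conj g' * r x + f x * conj (g x) * r').re) x := by
  refine (reCLM.hasFDerivAt.comp_hasDerivAt x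
    ((hf.mul hg.star).mul hr.ofReal_comp)).congr_deriv ?_
  simp only [RCLike.star_def, Pi.mul_apply, reCLM_apply, add_mul]

theorem sq_norm_mul_eq_re_mul_conj_mul (z : ℂ) (t : ℝ) : ‖z‖ ^ 2 * t = (z * conj z * t).re := by
  rw [mul_conj, ← ofReal_mul, ofReal_re, normSq_eq_norm_sq]

theorem HasDerivAt.sq_norm_mul_ofReal {f : ℝ → ℂ} {r : ℝ → ℝ} {f' : ℂ} {r' x : ℝ}
    (hf : HasDerivAt f f' x) (hr : HasDerivAt r r' x) :
    HasDerivAt (fun y => ‖f y‖ ^ 2 * r y)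
      ((f' * conj (f x) * r x + f x * conj f' * r x + f x * conj (f x) * r').re) x := by
  simpa only [sq_norm_mul_eq_re_mul_conj_mul] using hf.re_mul_conj_mul_ofReal hf hr

noncomputable def bilaplacianBoundary (u : ℝ → ℂ) (q : ℝ → ℝ) (x : ℝ) : ℝ :=
  1 / 2 * (‖iteratedDeriv 2 u x‖ ^ 2 * q x) - ‖deriv u x‖ ^ 2 * iteratedDeriv 2 q x
    + 3 / 2 * (iteratedDeriv 2 u x * conj (deriv u x) * deriv q x).re
    - (iteratedDeriv 3 u x * conj (deriv u x) * q x).re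
    - 1 / 2 * (deriv u x * conj (u x) * iteratedDeriv 3 q x).re
    + 1 / 2 * (iteratedDeriv 2 u x * conj (u x) * iteratedDeriv 2 q x).re
    - 1 / 2 * (iteratedDeriv 3 u x * conj (u x) * deriv q x).re

theorem hasDerivAt_bilaplacianBoundary {u : ℝ → ℂ} {q : ℝ → ℝ} (hu : ContDiff ℝ 4 u)
    (hq : ContDiff ℝ 4 q) (x : ℝ) :
    HasDerivAt (bilaplacianBoundary u q)
      (-(iteratedDeriv 4 u x * (conj (deriv u x) * q x + 1 / 2 * conj (u x) * deriv q x)).re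
        + 2 * (‖iteratedDeriv 2 u x‖ ^ 2 * deriv q x)
        - 3 / 2 * (‖deriv u x‖ ^ 2 * iteratedDeriv 3 q x)
        - 1 / 2 * (deriv u x * conj (u x) * iteratedDeriv 4 q x).re) x := by
  have u0 (y : ℝ) : HasDerivAt u (deriv u y) y := by
    simpa using hu.hasDerivAt_iteratedDeriv (k := 0) (by norm_num) y
  have u1 (y : ℝ) : HasDerivAt (deriv u) (iteratedDeriv 2 u y) y := by
    simpa using hu.hasDerivAt_iteratedDeriv (k := 1) (by norm_num) y
  have u2 (y : ℝ) : HasDerivAt (iteratedDeriv 2 u) (iteratedDeriv 3 u y) y :=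
    hu.hasDerivAt_iteratedDeriv (by norm_num) y
  have u3 (y : ℝ) : HasDerivAt (iteratedDeriv 3 u) (iteratedDeriv 4 u y) y :=
    hu.hasDerivAt_iteratedDeriv (by norm_num) y
  have q0 (y : ℝ) : HasDerivAt q (deriv q y) y := by
    simpa using hq.hasDerivAt_iteratedDeriv (k := 0) (by norm_num) y
  have q1 (y : ℝ) : HasDerivAt (deriv q) (iteratedDeriv 2 q y) y := by
    simpa using hq.hasDerivAt_iteratedDeriv (k := 1) (by norm_num) y
  have q2 (y : ℝ) : HasDerivAt (iteratedDeriv 2 q) (iteratedDeriv 3 q y) y :=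
    hq.hasDerivAt_iteratedDeriv (by norm_num) y
  have q3 (y : ℝ) : HasDerivAt (iteratedDeriv 3 q) (iteratedDeriv 4 q y) y :=
    hq.hasDerivAt_iteratedDeriv (by norm_num) y
  refine (((((((((u2 x).sq_norm_mul_ofReal (q0 x)).const_mul (1 / 2)).sub
    ((u1 x).sq_norm_mul_ofReal (q2 x))).add
    (((u2 x).re_mul_conj_mul_ofReal (u1 x) (q1 x)).const_mul (3 / 2))).sub
    ((u3 x).re_mul_conj_mul_ofReal (u1 x) (q0 x))).sub
    (((u1 x).re_mul_conj_mul_ofReal (u0 x) (q3 x)).const_mul (1 / 2))).add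
    (((u2 x).re_mul_conj_mul_ofReal (u0 x) (q2 x)).const_mul (1 / 2))).sub
    (((u3 x).re_mul_conj_mul_ofReal (u0 x) (q1 x)).const_mul (1 / 2))).congr_deriv ?_
  simp only [add_re, add_im, mul_re, mul_im, conj_re, conj_im, ofReal_re, ofReal_im, div_ofNat_re,
    div_ofNat_im, one_re, one_im, Complex.sq_norm, normSq_apply]
  ring

theorem multiplier_bilaplacian_general (a b : ℝ) (u : ℝ → ℂ) (q : ℝ → ℝ)
    (hu : ContDiff ℝ 4 u) (hq : ContDiff ℝ 4 q) :
    -(∫ x in a..b, iteratedDeriv 4 u x *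
        ((starRingEnd ℂ) (deriv u x) * Complex.ofReal (q x)
          + (1 / 2 : ℂ) * (starRingEnd ℂ) (u x) * Complex.ofReal (deriv q x))).re
    = -2 * (∫ x in a..b, ‖iteratedDeriv 2 u x‖ ^ 2 * deriv q x)
      + (3 / 2 : ℝ) * (∫ x in a..b, ‖deriv u x‖ ^ 2 * iteratedDeriv 3 q x)
      + (1 / 2 : ℝ) * (∫ x in a..b,
          deriv u x * (starRingEnd ℂ) (u x) * Complex.ofReal (iteratedDeriv 4 q x)).re
      + (1 / 2 : ℝ) * (‖iteratedDeriv 2 u b‖ ^ 2 * q b - ‖iteratedDeriv 2 u a‖ ^ 2 * q a)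
      - (‖deriv u b‖ ^ 2 * iteratedDeriv 2 q b - ‖deriv u a‖ ^ 2 * iteratedDeriv 2 q a)
      + (3 / 2 : ℝ) * (iteratedDeriv 2 u b * (starRingEnd ℂ) (deriv u b) * Complex.ofReal (deriv q b)
          - iteratedDeriv 2 u a * (starRingEnd ℂ) (deriv u a) * Complex.ofReal (deriv q a)).re
      - (iteratedDeriv 3 u b * (starRingEnd ℂ) (deriv u b) * Complex.ofReal (q b)
          - iteratedDeriv 3 u a * (starRingEnd ℂ) (deriv u a) * Complex.ofReal (q a)).re
      - (1 / 2 : ℝ) * (deriv u b * (starRingEnd ℂ) (u b) * Complex.ofReal (iteratedDeriv 3 q b)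
          - deriv u a * (starRingEnd ℂ) (u a) * Complex.ofReal (iteratedDeriv 3 q a)).re
      + (1 / 2 : ℝ) * (iteratedDeriv 2 u b * (starRingEnd ℂ) (u b) * Complex.ofReal (iteratedDeriv 2 q b)
          - iteratedDeriv 2 u a * (starRingEnd ℂ) (u a) * Complex.ofReal (iteratedDeriv 2 q a)).re
      - (1 / 2 : ℝ) * (iteratedDeriv 3 u b * (starRingEnd ℂ) (u b) * Complex.ofReal (deriv q b)
          - iteratedDeriv 3 u a * (starRingEnd ℂ) (u a) * Complex.ofReal (deriv q a)).re := by
  have cu0 := hu.continuous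
  have cu1 := hu.continuous_deriv (by norm_num)
  have cu2 := hu.continuous_iteratedDeriv 2 (by norm_num)
  have cu3 := hu.continuous_iteratedDeriv 3 (by norm_num)
  have cu4 := hu.continuous_iteratedDeriv 4 (by norm_num)
  have cq0 := hq.continuous
  have cq1 := hq.continuous_deriv (by norm_num)
  have cq2 := hq.continuous_iteratedDeriv 2 (by norm_num)
  have cq3 := hq.continuous_iteratedDeriv 3 (by norm_num)
  have cq4 := hq.continuous_iteratedDeriv 4 (by norm_num)
  have hFTC := integral_eq_sub_of_hasDerivAt (fun x _ => hasDerivAt_bilaplacianBoundary hu hq x)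
    (Continuous.intervalIntegrable (by fun_prop) a b)
  rw [integral_sub, integral_sub, integral_add, integral_neg, integral_const_mul,
    integral_const_mul, integral_const_mul] at hFTC
  · have re_integral (f : ℝ → ℂ) (hf : Continuous f) :
        ∫ x in a..b, (f x).re = (∫ x in a..b, f x).re :=
      intervalIntegral_re (hf.intervalIntegrable a b)
    rw [re_integral _ (by fun_prop), re_integral _ (by fun_prop)] at hFTC
    simp only [bilaplacianBoundary] at hFTC
    simp only [sub_re]
    linarith
  all_goals exact Continuous.intervalIntegrable (by fun_prop) a b

/-- Morawetz multiplier identity for the bi-Laplacian term (Step 3 of the multiplier lemma). -/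
theorem multiplier_bilaplacian (a b : ℝ) (hab : a ≤ b) (u : ℝ → ℂ) (q : ℝ → ℝ)
    (hu : ContDiff ℝ 4 u) (hq : ContDiff ℝ 4 q) :
    -(∫ x in a..b, iteratedDeriv 4 u x *
        ((starRingEnd ℂ) (deriv u x) * Complex.ofReal (q x)
          + (1 / 2 : ℂ) * (starRingEnd ℂ) (u x) * Complex.ofReal (deriv q x))).re
    = -2 * (∫ x in a..b, ‖iteratedDeriv 2 u x‖ ^ 2 * deriv q x)
      + (3 / 2 : ℝ) * (∫ x in a..b, ‖deriv u x‖ ^ 2 * iteratedDeriv 3 q x)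
      + (1 / 2 : ℝ) * (∫ x in a..b,
          deriv u x * (starRingEnd ℂ) (u x) * Complex.ofReal (iteratedDeriv 4 q x)).re
      + (1 / 2 : ℝ) * (‖iteratedDeriv 2 u b‖ ^ 2 * q b - ‖iteratedDeriv 2 u a‖ ^ 2 * q a)
      - (‖deriv u b‖ ^ 2 * iteratedDeriv 2 q b - ‖deriv u a‖ ^ 2 * iteratedDeriv 2 q a)
      + (3 / 2 : ℝ) * (iteratedDeriv 2 u b * (starRingEnd ℂ) (deriv u b) * Complex.ofReal (deriv q b)
          - iteratedDeriv 2 u a * (starRingEnd ℂ) (deriv u a) * Complex.ofReal (deriv q a)).re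
      - (iteratedDeriv 3 u b * (starRingEnd ℂ) (deriv u b) * Complex.ofReal (q b)
          - iteratedDeriv 3 u a * (starRingEnd ℂ) (deriv u a) * Complex.ofReal (q a)).re
      - (1 / 2 : ℝ) * (deriv u b * (starRingEnd ℂ) (u b) * Complex.ofReal (iteratedDeriv 3 q b)
          - deriv u a * (starRingEnd ℂ) (u a) * Complex.ofReal (iteratedDeriv 3 q a)).re
      + (1 / 2 : ℝ) * (iteratedDeriv 2 u b * (starRingEnd ℂ) (u b) * Complex.ofReal (iteratedDeriv 2 q b)
          - iteratedDeriv 2 u a * (starRingEnd ℂ) (u a) * Complex.ofReal (iteratedDeriv 2 q a)).re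
      - (1 / 2 : ℝ) * (iteratedDeriv 3 u b * (starRingEnd ℂ) (u b) * Complex.ofReal (deriv q b)
          - iteratedDeriv 3 u a * (starRingEnd ℂ) (u a) * Complex.ofReal (deriv q a)).re :=
  multiplier_bilaplacian_general a b u q hu hq
end

section
/- Let u : [a,b] × [0,T] → ℂ be smooth and q : [a,b] × [0,T] → ℝ be smooth. Then Re ∫_0^T ∫_a^b i ∂_t u ( \bar{∂_x u} q + (1/2) \bar u ∂_x q ) dx dt = (1/2) Im ∫_0^T ∫_a^b u \bar{∂_x u} ∂_t q dx dt − (1/2) Im [ ∫_a^b u \bar{∂_x u} q dx ]_{t=0}^{t=T} + Re( −(i/2) ∫_0^T [ u \bar{∂_t u} q ]_{x=a}^{x=b} dt ). -/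
open Complex intervalIntegral

open MeasureTheory


noncomputable section MTTHelpers

variable {E : Type*} [NormedAddCommGroup E] [NormedSpace ℝ E]

/-- partial derivative in the first variable -/
def pdx (F : ℝ × ℝ → E) (p : ℝ × ℝ) : E := fderiv ℝ F p (1, 0)
/-- partial derivative in the second variable -/
def pdt (F : ℝ × ℝ → E) (p : ℝ × ℝ) : E := fderiv ℝ F p (0, 1)

theorem hasDerivAt_pdx {F : ℝ × ℝ → E} (hF : ContDiff ℝ (⊤ : ℕ∞) F) (x t : ℝ) :
    HasDerivAt (fun y => F (y, t)) (pdx F (x, t)) x := by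
  have h1 : HasDerivAt (fun y : ℝ => (y, t)) ((1 : ℝ), (0 : ℝ)) x :=
    (hasDerivAt_id x).prodMk (hasDerivAt_const x t)
  exact ((hF.differentiable (by simp) (x, t)).hasFDerivAt).comp_hasDerivAt x h1

theorem hasDerivAt_pdt {F : ℝ × ℝ → E} (hF : ContDiff ℝ (⊤ : ℕ∞) F) (x t : ℝ) :
    HasDerivAt (fun s => F (x, s)) (pdt F (x, t)) t := by
  have h1 : HasDerivAt (fun s : ℝ => (x, s)) ((0 : ℝ), (1 : ℝ)) t :=
    (hasDerivAt_const t x).prodMk (hasDerivAt_id t)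
  exact ((hF.differentiable (by simp) (x, t)).hasFDerivAt).comp_hasDerivAt t h1

theorem contDiff_pdx {F : ℝ × ℝ → E} (hF : ContDiff ℝ (⊤ : ℕ∞) F) : ContDiff ℝ (⊤ : ℕ∞) (pdx F) :=
  (hF.fderiv_right (by simp)).clm_apply contDiff_const

theorem contDiff_pdt {F : ℝ × ℝ → E} (hF : ContDiff ℝ (⊤ : ℕ∞) F) : ContDiff ℝ (⊤ : ℕ∞) (pdt F) :=
  (hF.fderiv_right (by simp)).clm_apply contDiff_const

theorem pdx_pdt_comm {F : ℝ × ℝ → E} (hF : ContDiff ℝ (⊤ : ℕ∞) F) (p : ℝ × ℝ) :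
    pdx (pdt F) p = pdt (pdx F) p := by
  have hd : DifferentiableAt ℝ (fderiv ℝ F) p :=
    ((hF.fderiv_right (m := (⊤ : ℕ∞)) (by simp)).differentiable (by simp)) p
  have h1 : pdx (pdt F) p = fderiv ℝ (fderiv ℝ F) p (1, 0) (0, 1) := by
    unfold pdx pdt
    rw [fderiv_clm_apply hd (differentiableAt_const _)]
    simp
  have h2 : pdt (pdx F) p = fderiv ℝ (fderiv ℝ F) p (0, 1) (1, 0) := by
    unfold pdx pdt
    rw [fderiv_clm_apply hd (differentiableAt_const _)]
    simp
  rw [h1, h2, hF.contDiffAt.isSymmSndFDerivAt (by rw [minSmoothness_of_isRCLikeNormedField]; exact (WithTop.coe_le_coe.mpr le_top : ((2 : ℕ∞) : WithTop ℕ∞) ≤ ((⊤ : ℕ∞) : WithTop ℕ∞))) (1, 0) (0, 1)]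

theorem HasDerivAt.cconj {f : ℝ → ℂ} {f' : ℂ} {x : ℝ} (h : HasDerivAt f f' x) :
    HasDerivAt (fun y => (starRingEnd ℂ) (f y)) ((starRingEnd ℂ) f') x := by
  simpa using h.star

theorem HasDerivAt.oreal {f : ℝ → ℝ} {f' : ℝ} {x : ℝ} (h : HasDerivAt f f' x) :
    HasDerivAt (fun y => Complex.ofReal (f y)) (Complex.ofReal f') x :=
  Complex.ofRealCLM.hasFDerivAt.comp_hasDerivAt x h

theorem HasDerivAt.cim {f : ℝ → ℂ} {f' : ℂ} {x : ℝ} (h : HasDerivAt f f' x) :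
    HasDerivAt (fun y => (f y).im) f'.im x :=
  Complex.imCLM.hasFDerivAt.comp_hasDerivAt x h

theorem mtt_alg (p r s m : ℂ) (qq qqx qqt : ℝ) :
    (Complex.I * s * ((starRingEnd ℂ) r * (qq : ℂ) + (1/2 : ℂ) * (starRingEnd ℂ) p * (qqx : ℂ))).re
    = (1/2) * (p * (starRingEnd ℂ) r * (qqt : ℂ)).im
      - (1/2) * (((s * (starRingEnd ℂ) r + p * (starRingEnd ℂ) m) * (qq : ℂ)
          + p * (starRingEnd ℂ) r * (qqt : ℂ)).im)
      + (1/2) * (((r * (starRingEnd ℂ) s + p * (starRingEnd ℂ) m) * (qq : ℂ)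
          + p * (starRingEnd ℂ) s * (qqx : ℂ)).im) := by
  simp only [mul_re, mul_im, add_re, add_im, I_re, I_im, conj_re, conj_im, ofReal_re,
    ofReal_im, one_div, inv_re, inv_im]
  norm_num
  ring

theorem mtt_re_neg_I_half (z : ℂ) : (-(Complex.I/2) * z).re = z.im / 2 := by
  simp [mul_re]; ring

theorem intervalIntegral_im {f : ℝ → ℂ} {a b : ℝ} (h : IntervalIntegrable f volume a b) :
    (∫ x in a..b, f x).im = ∫ x in a..b, (f x).im := by
  simpa using (ContinuousLinearMap.intervalIntegral_comp_comm Complex.imCLM h).symm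

/-! ### Specialized definitions -/

/-- the curried function on the product -/
def fU (u : ℝ → ℝ → ℂ) : ℝ × ℝ → ℂ := fun p => u p.1 p.2
/-- the curried real function on the product -/
def fQ (q : ℝ → ℝ → ℝ) : ℝ × ℝ → ℝ := fun p => q p.1 p.2

/-- integrand `Im (u conj(u_x) q_t)` -/
def mA (u : ℝ → ℝ → ℂ) (q : ℝ → ℝ → ℝ) (x t : ℝ) : ℝ :=
  (u x t * (starRingEnd ℂ) (pdx (fU u) (x, t)) * ((pdt (fQ q) (x, t) : ℝ) : ℂ)).im

/-- `u conj(u_x) q` -/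
def mP (u : ℝ → ℝ → ℂ) (q : ℝ → ℝ → ℝ) (x t : ℝ) : ℂ :=
  u x t * (starRingEnd ℂ) (pdx (fU u) (x, t)) * ((q x t : ℝ) : ℂ)

/-- `u conj(u_t) q` -/
def mH (u : ℝ → ℝ → ℂ) (q : ℝ → ℝ → ℝ) (x t : ℝ) : ℂ :=
  u x t * (starRingEnd ℂ) (pdt (fU u) (x, t)) * ((q x t : ℝ) : ℂ)

/-- `Im ∂ₜ (u conj(u_x) q)` -/
def mPT (u : ℝ → ℝ → ℂ) (q : ℝ → ℝ → ℝ) (x t : ℝ) : ℝ :=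
  ((pdt (fU u) (x, t) * (starRingEnd ℂ) (pdx (fU u) (x, t))
      + u x t * (starRingEnd ℂ) (pdt (pdx (fU u)) (x, t))) * ((q x t : ℝ) : ℂ)
    + u x t * (starRingEnd ℂ) (pdx (fU u) (x, t)) * ((pdt (fQ q) (x, t) : ℝ) : ℂ)).im

/-- `Im ∂ₓ (u conj(u_t) q)` -/
def mHX (u : ℝ → ℝ → ℂ) (q : ℝ → ℝ → ℝ) (x t : ℝ) : ℝ :=
  ((pdx (fU u) (x, t) * (starRingEnd ℂ) (pdt (fU u) (x, t))
      + u x t * (starRingEnd ℂ) (pdt (pdx (fU u)) (x, t))) * ((q x t : ℝ) : ℂ)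
    + u x t * (starRingEnd ℂ) (pdt (fU u) (x, t)) * ((pdx (fQ q) (x, t) : ℝ) : ℂ)).im

section Lemmas

variable {u : ℝ → ℝ → ℂ} {q : ℝ → ℝ → ℝ}
  (hu : ContDiff ℝ (⊤ : ℕ∞) (fU u)) (hq : ContDiff ℝ (⊤ : ℕ∞) (fQ q))

include hu hq

theorem hasDerivAt_mP (x t : ℝ) :
    HasDerivAt (fun s => (mP u q x s).im) (mPT u q x t) t := by
  have h1 : HasDerivAt (fun s => u x s) (pdt (fU u) (x, t)) t := hasDerivAt_pdt hu x t
  have h2 : HasDerivAt (fun s => (starRingEnd ℂ) (pdx (fU u) (x, s)))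
      ((starRingEnd ℂ) (pdt (pdx (fU u)) (x, t))) t :=
    (hasDerivAt_pdt (contDiff_pdx hu) x t).cconj
  have h3 : HasDerivAt (fun s => Complex.ofReal (q x s)) (Complex.ofReal (pdt (fQ q) (x, t))) t :=
    (hasDerivAt_pdt hq x t).oreal
  exact ((h1.mul h2).mul h3).cim

theorem hasDerivAt_mH (t x : ℝ) :
    HasDerivAt (fun y => (mH u q y t).im) (mHX u q x t) x := by
  have h1 : HasDerivAt (fun y => u y t) (pdx (fU u) (x, t)) x := hasDerivAt_pdx hu x t
  have h2 : HasDerivAt (fun y => (starRingEnd ℂ) (pdt (fU u) (y, t)))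
      ((starRingEnd ℂ) (pdx (pdt (fU u)) (x, t))) x :=
    (hasDerivAt_pdx (contDiff_pdt hu) x t).cconj
  rw [pdx_pdt_comm hu (x, t)] at h2
  have h3 : HasDerivAt (fun y => Complex.ofReal (q y t)) (Complex.ofReal (pdx (fQ q) (x, t))) x :=
    (hasDerivAt_pdx hq x t).oreal
  exact ((h1.mul h2).mul h3).cim

omit hu hq in
theorem mtt_pointwise (x t : ℝ) :
    (Complex.I * pdt (fU u) (x, t) *
        ((starRingEnd ℂ) (pdx (fU u) (x, t)) * ((q x t : ℝ) : ℂ)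
          + (1/2 : ℂ) * (starRingEnd ℂ) (u x t) * ((pdx (fQ q) (x, t) : ℝ) : ℂ))).re
    = (1/2) * mA u q x t - (1/2) * mPT u q x t + (1/2) * mHX u q x t := by
  unfold mA mPT mHX
  exact mtt_alg (u x t) (pdx (fU u) (x, t)) (pdt (fU u) (x, t)) (pdt (pdx (fU u)) (x, t))
    (q x t) (pdx (fQ q) (x, t)) (pdt (fQ q) (x, t))

theorem continuous_mA : Continuous (fun p : ℝ × ℝ => mA u q p.1 p.2) := by
  unfold mA
  exact Complex.continuous_im.comp
    ((hu.continuous.mul (Complex.continuous_conj.comp (contDiff_pdx hu).continuous)).mul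
      (Complex.continuous_ofReal.comp (contDiff_pdt hq).continuous))

theorem continuous_mPT : Continuous (fun p : ℝ × ℝ => mPT u q p.1 p.2) := by
  unfold mPT
  exact Complex.continuous_im.comp
    ((((((contDiff_pdt hu).continuous.mul
        (Complex.continuous_conj.comp (contDiff_pdx hu).continuous)).add
      (hu.continuous.mul (Complex.continuous_conj.comp
        (contDiff_pdt (contDiff_pdx hu)).continuous))).mul
      (Complex.continuous_ofReal.comp hq.continuous)).add
      ((hu.continuous.mul (Complex.continuous_conj.comp (contDiff_pdx hu).continuous)).mul
        (Complex.continuous_ofReal.comp (contDiff_pdt hq).continuous))))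

theorem continuous_mHX : Continuous (fun p : ℝ × ℝ => mHX u q p.1 p.2) := by
  unfold mHX
  exact Complex.continuous_im.comp
    ((((((contDiff_pdx hu).continuous.mul
        (Complex.continuous_conj.comp (contDiff_pdt hu).continuous)).add
      (hu.continuous.mul (Complex.continuous_conj.comp
        (contDiff_pdt (contDiff_pdx hu)).continuous))).mul
      (Complex.continuous_ofReal.comp hq.continuous)).add
      ((hu.continuous.mul (Complex.continuous_conj.comp (contDiff_pdt hu).continuous)).mul
        (Complex.continuous_ofReal.comp (contDiff_pdx hq).continuous))))

theorem continuous_mP : Continuous (fun p : ℝ × ℝ => mP u q p.1 p.2) := by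
  unfold mP
  exact (hu.continuous.mul (Complex.continuous_conj.comp (contDiff_pdx hu).continuous)).mul
    (Complex.continuous_ofReal.comp hq.continuous)

theorem continuous_mH : Continuous (fun p : ℝ × ℝ => mH u q p.1 p.2) := by
  unfold mH
  exact (hu.continuous.mul (Complex.continuous_conj.comp (contDiff_pdt hu).continuous)).mul
    (Complex.continuous_ofReal.comp hq.continuous)

end Lemmas

theorem mA_def (u : ℝ → ℝ → ℂ) (q : ℝ → ℝ → ℝ) (x t : ℝ) :
    (u x t * (starRingEnd ℂ) (pdx (fU u) (x, t)) * ((pdt (fQ q) (x, t) : ℝ) : ℂ)).im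
      = mA u q x t := rfl

theorem mP_def (u : ℝ → ℝ → ℂ) (q : ℝ → ℝ → ℝ) (x t : ℝ) :
    u x t * (starRingEnd ℂ) (pdx (fU u) (x, t)) * ((q x t : ℝ) : ℂ) = mP u q x t := rfl

theorem mH_def (u : ℝ → ℝ → ℂ) (q : ℝ → ℝ → ℝ) (x t : ℝ) :
    u x t * (starRingEnd ℂ) (pdt (fU u) (x, t)) * ((q x t : ℝ) : ℂ) = mH u q x t := rfl

attribute [irreducible] pdx pdt mA mPT mHX mP mH


end MTTHelpers


/-- Morawetz multiplier identity for the time-derivative term (Step 1 of the multiplier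
lemma), for `u : [a,b] × [0,T] → ℂ` smooth and `q` real-valued smooth; here `u x t`
and `q x t`, `∂ₜ` is the derivative in `t` and `∂ₓ` the derivative in `x`. -/
theorem multiplier_time_term (a b T : ℝ) (hab : a ≤ b) (hT : 0 < T)
    (u : ℝ → ℝ → ℂ) (q : ℝ → ℝ → ℝ)
    (hu : ContDiff ℝ (⊤ : ℕ∞) (fun p : ℝ × ℝ => u p.1 p.2))
    (hq : ContDiff ℝ (⊤ : ℕ∞) (fun p : ℝ × ℝ => q p.1 p.2)) :
    (∫ t in (0:ℝ)..T, ∫ x in a..b,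
        (Complex.I * deriv (u x) t *
          ((starRingEnd ℂ) (deriv (fun y => u y t) x) * Complex.ofReal (q x t)
            + (1 / 2 : ℂ) * (starRingEnd ℂ) (u x t)
                * Complex.ofReal (deriv (fun y => q y t) x))).re)
    = (1 / 2 : ℝ) * (∫ t in (0:ℝ)..T, ∫ x in a..b,
          (u x t * (starRingEnd ℂ) (deriv (fun y => u y t) x)
            * Complex.ofReal (deriv (q x) t)).im)
      - (1 / 2 : ℝ) *
          ((∫ x in a..b, u x T * (starRingEnd ℂ) (deriv (fun y => u y T) x)
              * Complex.ofReal (q x T)).im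
            - (∫ x in a..b, u x 0 * (starRingEnd ℂ) (deriv (fun y => u y 0) x)
              * Complex.ofReal (q x 0)).im)
      + (-(Complex.I / 2) * (∫ t in (0:ℝ)..T,
            (u b t * (starRingEnd ℂ) (deriv (u b) t) * Complex.ofReal (q b t)
              - u a t * (starRingEnd ℂ) (deriv (u a) t) * Complex.ofReal (q a t)))).re := by
  have hu' : ContDiff ℝ (⊤ : ℕ∞) (fU u) := hu
  have hq' : ContDiff ℝ (⊤ : ℕ∞) (fQ q) := hq
  have hT0 : (0:ℝ) ≤ T := hT.le
  -- rewrite one-variable derivatives as partial derivatives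
  have hdu_t : ∀ x t, deriv (u x) t = pdt (fU u) (x, t) := fun x t =>
    (hasDerivAt_pdt hu' x t).deriv
  have hdu_x : ∀ t x, deriv (fun y => u y t) x = pdx (fU u) (x, t) := fun t x =>
    (hasDerivAt_pdx hu' x t).deriv
  have hdq_t : ∀ x t, deriv (q x) t = pdt (fQ q) (x, t) := fun x t =>
    (hasDerivAt_pdt hq' x t).deriv
  have hdq_x : ∀ t x, deriv (fun y => q y t) x = pdx (fQ q) (x, t) := fun t x =>
    (hasDerivAt_pdx hq' x t).deriv
  -- continuity facts
  have cA : Continuous (fun p : ℝ × ℝ => mA u q p.1 p.2) := continuous_mA hu' hq'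
  have cPT : Continuous (fun p : ℝ × ℝ => mPT u q p.1 p.2) := continuous_mPT hu' hq'
  have cHX : Continuous (fun p : ℝ × ℝ => mHX u q p.1 p.2) := continuous_mHX hu' hq'
  have cP : Continuous (fun p : ℝ × ℝ => mP u q p.1 p.2) := continuous_mP hu' hq'
  have cH : Continuous (fun p : ℝ × ℝ => mH u q p.1 p.2) := continuous_mH hu' hq'
  -- integrability in x for fixed t
  have iA : ∀ t, IntervalIntegrable (fun x => mA u q x t) volume a b := fun t =>
    (cA.comp (continuous_id.prodMk continuous_const)).intervalIntegrable a b
  have iPT : ∀ t, IntervalIntegrable (fun x => mPT u q x t) volume a b := fun t =>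
    (cPT.comp (continuous_id.prodMk continuous_const)).intervalIntegrable a b
  have iHX : ∀ t, IntervalIntegrable (fun x => mHX u q x t) volume a b := fun t =>
    (cHX.comp (continuous_id.prodMk continuous_const)).intervalIntegrable a b
  have iPslice : ∀ t, IntervalIntegrable (fun x => (mP u q x t).im) volume a b := fun t =>
    (Complex.continuous_im.comp
      (cP.comp (continuous_id.prodMk continuous_const))).intervalIntegrable a b
  have iPcslice : ∀ t, IntervalIntegrable (fun x => mP u q x t) volume a b := fun t =>
    (cP.comp (continuous_id.prodMk continuous_const)).intervalIntegrable a b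
  -- integrability in t
  have iIA : IntervalIntegrable (fun t => ∫ x in a..b, mA u q x t) volume 0 T :=
    (intervalIntegral.continuous_parametric_intervalIntegral_of_continuous'
      (f := fun t x => mA u q x t)
      (cA.comp (continuous_snd.prodMk continuous_fst)) a b).intervalIntegrable 0 T
  have iIPT : IntervalIntegrable (fun t => ∫ x in a..b, mPT u q x t) volume 0 T :=
    (intervalIntegral.continuous_parametric_intervalIntegral_of_continuous'
      (f := fun t x => mPT u q x t)
      (cPT.comp (continuous_snd.prodMk continuous_fst)) a b).intervalIntegrable 0 T
  have iHb : IntervalIntegrable (fun t => (mH u q b t).im) volume 0 T :=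
    (Complex.continuous_im.comp
      (cH.comp (continuous_const.prodMk continuous_id))).intervalIntegrable 0 T
  have iHa : IntervalIntegrable (fun t => (mH u q a t).im) volume 0 T :=
    (Complex.continuous_im.comp
      (cH.comp (continuous_const.prodMk continuous_id))).intervalIntegrable 0 T
  have iHsub : IntervalIntegrable (fun t => mH u q b t - mH u q a t) volume 0 T :=
    ((cH.comp (continuous_const.prodMk continuous_id)).sub
      (cH.comp (continuous_const.prodMk continuous_id))).intervalIntegrable 0 T
  -- FTC in x for the H-term
  have ftcX : ∀ t, (∫ x in a..b, mHX u q x t) = (mH u q b t).im - (mH u q a t).im := fun t =>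
    integral_eq_sub_of_hasDerivAt (fun x _ => hasDerivAt_mH hu' hq' t x) (iHX t)
  -- FTC in t for the P-term
  have ftcT : ∀ x, (∫ t in (0:ℝ)..T, mPT u q x t) = (mP u q x T).im - (mP u q x 0).im :=
    fun x => integral_eq_sub_of_hasDerivAt (fun t _ => hasDerivAt_mP hu' hq' x t)
      ((cPT.comp (continuous_const.prodMk continuous_id)).intervalIntegrable 0 T)
  -- Fubini for the PT-term
  have iPTprod : Integrable (Function.uncurry fun t x => mPT u q x t)
      ((volume.restrict (Set.Ioc (0:ℝ) T)).prod (volume.restrict (Set.Ioc a b))) := by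
    rw [Measure.prod_restrict, ← Measure.volume_eq_prod]
    exact (((cPT.comp (continuous_snd.prodMk continuous_fst)).continuousOn).integrableOn_compact
      (isCompact_Icc.prod isCompact_Icc)).mono_set
      (Set.prod_mono Set.Ioc_subset_Icc_self Set.Ioc_subset_Icc_self)
  have fub : (∫ t in (0:ℝ)..T, ∫ x in a..b, mPT u q x t)
      = ∫ x in a..b, ∫ t in (0:ℝ)..T, mPT u q x t := by
    rw [intervalIntegral.integral_of_le hT0, intervalIntegral.integral_of_le hab]
    simp_rw [intervalIntegral.integral_of_le hab, intervalIntegral.integral_of_le hT0]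
    exact MeasureTheory.integral_integral_swap iPTprod
  have fub2 : (∫ t in (0:ℝ)..T, ∫ x in a..b, mPT u q x t)
      = (∫ x in a..b, (mP u q x T).im) - (∫ x in a..b, (mP u q x 0).im) := by
    rw [fub, integral_congr (g := fun x => (mP u q x T).im - (mP u q x 0).im)
      (fun x _ => ftcT x), integral_sub (iPslice T) (iPslice 0)]
  -- the slice identity in x, for every t
  have hslice : ∀ t : ℝ, (∫ x in a..b,
      (Complex.I * pdt (fU u) (x, t) *
        ((starRingEnd ℂ) (pdx (fU u) (x, t)) * ((q x t : ℝ) : ℂ)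
          + (1 / 2 : ℂ) * (starRingEnd ℂ) (u x t) * ((pdx (fQ q) (x, t) : ℝ) : ℂ))).re)
      = (1/2) * (∫ x in a..b, mA u q x t) - (1/2) * (∫ x in a..b, mPT u q x t)
        + ((1/2) * (mH u q b t).im - (1/2) * (mH u q a t).im) := by
    intro t
    rw [integral_congr
      (g := fun x => (1/2) * mA u q x t - (1/2) * mPT u q x t + (1/2) * mHX u q x t)
      (fun x _ => mtt_pointwise x t)]
    rw [integral_add (((iA t).const_mul _).sub ((iPT t).const_mul _)) ((iHX t).const_mul _),
      integral_sub ((iA t).const_mul _) ((iPT t).const_mul _),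
      intervalIntegral.integral_const_mul, intervalIntegral.integral_const_mul,
      intervalIntegral.integral_const_mul, ftcX t]
    ring
  -- rewrite derivatives, then fold the named integrands
  simp only [hdu_t, hdu_x, hdq_t, hdq_x]
  simp only [mA_def, mP_def, mH_def]
  have hstep : (∫ t in (0:ℝ)..T, ∫ x in a..b,
      (Complex.I * pdt (fU u) (x, t) *
        ((starRingEnd ℂ) (pdx (fU u) (x, t)) * ((q x t : ℝ) : ℂ)
          + (1 / 2 : ℂ) * (starRingEnd ℂ) (u x t) * ((pdx (fQ q) (x, t) : ℝ) : ℂ))).re)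
      = ∫ t in (0:ℝ)..T, ((1/2) * (∫ x in a..b, mA u q x t)
          - (1/2) * (∫ x in a..b, mPT u q x t)
          + ((1/2) * (mH u q b t).im - (1/2) * (mH u q a t).im)) :=
    integral_congr (fun t _ => hslice t)
  rw [hstep,
    integral_add ((iIA.const_mul _).sub (iIPT.const_mul _))
      ((iHb.const_mul _).sub (iHa.const_mul _)),
    integral_sub (iIA.const_mul _) (iIPT.const_mul _),
    integral_sub (iHb.const_mul _) (iHa.const_mul _),
    intervalIntegral.integral_const_mul, intervalIntegral.integral_const_mul,
    intervalIntegral.integral_const_mul, intervalIntegral.integral_const_mul,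
    fub2]
  rw [_root_.intervalIntegral_im (iPcslice T), _root_.intervalIntegral_im (iPcslice 0),
    mtt_re_neg_I_half, _root_.intervalIntegral_im iHsub]
  simp_rw [Complex.sub_im]
  rw [integral_sub iHb iHa]
  ring
end
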